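/- arXiv:1304.5272 — 3 statements merged into one kernel-verified Lean document; each statement's English description precedes it below -/
import Mathlib

section
/- Let p be a prime, r ≥ 2, and let x₁, …, x_r be r distinct elements of 𝔽_p. Suppose ℳ is a nonempty finite subset of the algebraic closure of 𝔽_p with 4|ℳ| < p^(1/r). Then there exists an index j ∈ {1, …, r} such that the translate ℳ + x_j is not contained in the union over i ≠ j of the translates ℳ + x_i. -/
/-!
If every translate `M + x j` were covered by the others, the same would hold for the slice
`S = {t ∈ 𝔽_p | m₀ + t ∈ M}` through a point `m₀ ∈ M`: each `t ∈ S` has some `t + x j - x i ∈ S`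
with `i ≠ j`. By Dirichlet's pigeonhole argument some `c ≠ 0` makes every `c * x i`
congruent to an integer `z i` with `|z i| ≤ p / (2|S| + 1)`. Taking `j` with `z j` maximal,
every point of `c S` has another point of `c S` at most `2 p / (2|S| + 1)` steps ahead, so
`|S| + 1` forward jumps from `0` stay below `p` and visit `|S| + 1` distinct points of `c S`.
-/

open Finset Function

namespace ZMod

theorem le_mul_card_of_forall_exists_add_mem {n D : ℕ} {T : Finset (ZMod n)} (hT : T.Nonempty)
    (hstep : ∀ u ∈ T, ∃ d ∈ Icc 1 D, u + d ∈ T) : n ≤ D * #T := by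
  by_contra! hlt
  obtain ⟨u₀, hu₀⟩ := hT
  choose! d hd using hstep
  -- the positions `u₀ + a k` reached after `k` jumps
  set a : ℕ → ℕ := fun k => (fun b : ℕ => b + d (u₀ + b))^[k] 0 with ha_def
  have ha_succ (k : ℕ) : a (k + 1) = a k + d (u₀ + a k) :=
    iterate_succ_apply' (fun b : ℕ => b + d (u₀ + b)) k 0
  have ha : ∀ k, u₀ + a k ∈ T ∧ a k ≤ D * k := by
    intro k
    induction k with
    | zero => simpa [ha_def] using hu₀
    | succ k ih =>
      have hdk := hd _ ih.1
      rw [mem_Icc] at hdk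
      rw [ha_succ, Nat.cast_add, ← add_assoc, mul_add_one]
      exact ⟨hdk.2, by omega⟩
  have hmono : StrictMono a := strictMono_nat_of_lt_succ fun k => by
    have := (mem_Icc.mp (hd _ (ha k).1).1).1
    rw [ha_succ]; omega
  have hinj : Set.InjOn (fun k => u₀ + (a k : ZMod n)) (range (#T + 1)) := by
    intro k hk l hl hkl
    have hlt_n : ∀ m ∈ range (#T + 1), a m < n := fun m hm =>
      (ha m).2.trans_lt <| (Nat.mul_le_mul_left D (Nat.lt_succ_iff.mp (mem_range.mp hm))).trans_lt hlt
    rw [add_right_inj, natCast_eq_natCast_iff', Nat.mod_eq_of_lt (hlt_n k hk),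
      Nat.mod_eq_of_lt (hlt_n l hl)] at hkl
    exact hmono.injective hkl
  have := card_le_card_of_injOn _ (fun k _ => (ha k).1) hinj
  simp at this

theorem exists_mul_eq_intCast_abs_le {n r K : ℕ} (hK : 0 < K) (hn : K ^ r < n)
    (y : Fin r → ZMod n) :
    ∃ c : ZMod n, c ≠ 0 ∧ ∃ z : Fin r → ℤ, ∀ i, (z i : ZMod n) = c * y i ∧ |z i| ≤ n / K := by
  have : NeZero n := ⟨by omega⟩
  -- pigeonhole on the blocks of length `L` containing the residues `c * y i`
  set L := n / K + 1
  have hL : 0 < L := Nat.succ_pos _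
  have hblock (c : ZMod n) (i : Fin r) : (c * y i).val / L < K :=
    (Nat.div_lt_iff_lt_mul hL).mpr <| (val_lt _).trans <| by
      simpa [L, mul_add_one, mul_comm] using Nat.lt_div_mul_add (a := n) hK
  obtain ⟨c₁, c₂, hne, heq⟩ := Fintype.exists_ne_map_eq_of_card_lt
    (fun c i => (⟨(c * y i).val / L, hblock c i⟩ : Fin K)) (by simpa using hn)
  refine ⟨c₁ - c₂, sub_ne_zero.mpr hne, fun i => (c₁ * y i).val - (c₂ * y i).val, fun i => ⟨?_, ?_⟩⟩
  · push_cast [natCast_val, cast_id]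
    ring
  · have hq := congrArg Fin.val (congrFun heq i)
    dsimp only at hq
    set a := (c₁ * y i).val
    set b := (c₂ * y i).val
    have ha := Nat.lt_div_mul_add (a := a) hL
    have hb := Nat.lt_div_mul_add (a := b) hL
    have ha' := Nat.div_mul_le_self a L
    have hb' := Nat.div_mul_le_self b L
    rw [hq] at ha ha'
    rw [abs_le]
    dsimp only
    constructor <;> omega

theorem exists_translate_not_covered {p r : ℕ} [Fact p.Prime] [NeZero r] {S : Finset (ZMod p)}
    (hS : S.Nonempty) {y : Fin r → ZMod p} (hy : Injective y) (hp : (2 * #S + 1) ^ r < p) :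
    ∃ j, ∃ t ∈ S, ∀ i ≠ j, t + y j - y i ∉ S := by
  by_contra! hcov
  obtain ⟨c, hc, z, hz⟩ := exists_mul_eq_intCast_abs_le (by omega) hp y
  set Δ := p / (2 * #S + 1)
  have hzinj : Injective z := fun i i' h =>
    hy <| mul_left_cancel₀ hc <| by rw [← (hz i).1, ← (hz i').1, h]
  obtain ⟨j, -, hj⟩ := exists_max_image univ z univ_nonempty
  -- after scaling by `c`, the translations by `y j - y i` become jumps forward by `z j - z i`
  have hstep : ∀ u ∈ S.image (c * ·), ∃ d ∈ Icc 1 (2 * Δ), u + d ∈ S.image (c * ·) := by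
    intro u hu
    obtain ⟨t, ht, rfl⟩ := mem_image.mp hu
    obtain ⟨i, hij, hi⟩ := hcov j t ht
    have hlt : z i < z j := (hj i (mem_univ i)).lt_of_ne (hzinj.ne hij)
    have hzi := abs_le.mp (hz i).2
    have hzj := abs_le.mp (hz j).2
    refine ⟨(z j - z i).toNat, mem_Icc.mpr ⟨by omega, by omega⟩, mem_image.mpr ⟨_, hi, ?_⟩⟩
    have hcast : (((z j - z i).toNat : ℕ) : ZMod p) = ((z j - z i : ℤ) : ZMod p) := by
      rw [← Int.cast_natCast, Int.toNat_of_nonneg (by omega)]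
    rw [hcast, Int.cast_sub, (hz i).1, (hz j).1]
    ring
  have hpΔ := le_mul_card_of_forall_exists_add_mem (hS.image _) hstep
  rw [card_image_of_injective _ (mul_right_injective₀ hc)] at hpΔ
  have hΔ : 0 < Δ := Nat.div_pos ((Nat.le_self_pow (NeZero.ne r) _).trans hp.le) (Nat.succ_pos _)
  have hΔp : Δ * (2 * #S + 1) ≤ p := Nat.div_mul_le_self _ _
  nlinarith

end ZMod

theorem translate_not_covered_general (p r : ℕ) [Fact p.Prime]
    (x : Fin r → ZMod p) (hx : Function.Injective x)
    (M : Finset (AlgebraicClosure (ZMod p))) (hM : M.Nonempty)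
    (hcard : (4 * M.card : ℝ) < (p : ℝ) ^ ((1 : ℝ) / r)) :
    ∃ j : Fin r,
      ¬ ((fun m => m + algebraMap (ZMod p) (AlgebraicClosure (ZMod p)) (x j)) '' (M : Set (AlgebraicClosure (ZMod p)))
        ⊆ ⋃ i ∈ {i : Fin r | i ≠ j},
            (fun m => m + algebraMap (ZMod p) (AlgebraicClosure (ZMod p)) (x i)) '' (M : Set (AlgebraicClosure (ZMod p)))) := by
  classical
  have hM₁ : 1 ≤ #M := hM.card_pos
  have hr : r ≠ 0 := by
    rintro rfl
    have : (1 : ℝ) ≤ #M := by exact_mod_cast hM₁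
    norm_num at hcard
    linarith
  have : NeZero r := ⟨hr⟩
  have hbound : (2 * #M + 1) ^ r < p := by
    have h4 : ((4 * #M : ℕ) : ℝ) ^ (r : ℝ) < p :=
      (Real.lt_rpow_inv_iff_of_pos (by positivity) (by positivity) (by positivity)).mp
        (by rw [← one_div]; exact_mod_cast hcard)
    rw [Real.rpow_natCast] at h4
    exact (Nat.pow_le_pow_left (show 2 * #M + 1 ≤ 4 * #M by omega) r).trans_lt (by exact_mod_cast h4)
  by_contra! hcov
  obtain ⟨m₀, hm₀⟩ := hM
  set φ := algebraMap (ZMod p) (AlgebraicClosure (ZMod p))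
  set S := univ.filter fun t => m₀ + φ t ∈ M
  have hSM : #S ≤ #M := card_le_card_of_injOn (m₀ + φ ·) (fun t ht => (mem_filter.mp ht).2)
    ((add_right_injective m₀).comp φ.injective).injOn
  obtain ⟨j, t, ht, hj⟩ := ZMod.exists_translate_not_covered (S := S) ⟨0, by simpa [S]⟩ hx
    ((Nat.pow_le_pow_left (by omega) r).trans_lt hbound)
  obtain ⟨i, hij, hi⟩ : ∃ i, i ≠ j ∧ m₀ + φ t + φ (x j) + -φ (x i) ∈ M := by
    simpa using hcov j ⟨m₀ + φ t, by simpa [S] using ht, rfl⟩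
  refine hj i hij (mem_filter.mpr ⟨mem_univ _, ?_⟩)
  convert hi using 1
  rw [map_sub, map_add]
  abel

/-- Lemma 2.2: translation lemma over the algebraic closure of `𝔽_p`. -/
theorem translate_not_covered (p r : ℕ) [Fact p.Prime] (hr : 2 ≤ r)
    (x : Fin r → ZMod p) (hx : Function.Injective x)
    (M : Finset (AlgebraicClosure (ZMod p))) (hM : M.Nonempty)
    (hcard : (4 * M.card : ℝ) < (p : ℝ) ^ ((1 : ℝ) / r)) :
    ∃ j : Fin r,
      ¬ ((fun m => m + algebraMap (ZMod p) (AlgebraicClosure (ZMod p)) (x j)) '' (M : Set (AlgebraicClosure (ZMod p)))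
        ⊆ ⋃ i ∈ {i : Fin r | i ≠ j},
            (fun m => m + algebraMap (ZMod p) (AlgebraicClosure (ZMod p)) (x i)) '' (M : Set (AlgebraicClosure (ZMod p)))) :=
  translate_not_covered_general p r x hx M hM hcard
end

section
/- Let p be a prime, H a positive integer, and N₀ a real number with 0 ≤ N₀ ≤ p. Suppose T: (subsets of {1,…,H}) → ℝ satisfies T(A) = p·(N₀/p)^|A| + E(A) with |E(A)| ≤ c for all nonempty A ⊆ {1,…,H}. Define S_r = Σ_{t=1}^{r} S(r,t) t! Σ_{|A|=t, A ⊆ {1,…,H}} T(A) for r ≥ 1 and S_0 = p, and define M_k = Σ_{r=0}^{k} C(k,r) (-H N₀/p)^(k-r) S_r. Then M_k = p·μ_k(H, N₀/p) + E', where μ_k(H,P) = Σ_{h=0}^{H} C(H,h) P^h (1-P)^(H-h) (h - HP)^k and |E'| ≤ c · Σ_{r=1}^{k} C(k,r) (HN₀/p)^(k-r) Σ_{t=1}^{r} S(r,t) t! C(H,t). -/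
/-!
Let `X ~ Bin(H, P)` with `P = N₀ / p`. Expanding `(h - HP)^k` binomially gives
`μ_k = ∑_r C(k,r) (-HP)^(k-r) E[X^r]`, so `M_k - p μ_k = ∑_r C(k,r) (-HP)^(k-r) (S_r - p E[X^r])`.
Writing `x^r = ∑_t S(r,t) t! C(x,t)` and using the factorial moments `E[C(X,t)] = C(H,t) P^t`,
`S_r - p E[X^r] = ∑_t S(r,t) t! ∑_{|A|=t} (T(A) - p P^t)`, and each of the `C(H,t)` terms of
the inner sum is at most `c` in absolute value.
-/

/-- Stirling numbers of the second kind: `stirling2 r t` is the number of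
partitions of an `r`-element set into exactly `t` nonempty subsets. -/
def stirling2 : ℕ → ℕ → ℕ
  | 0, 0 => 1
  | 0, _ + 1 => 0
  | _ + 1, 0 => 0
  | n + 1, k + 1 => (k + 1) * stirling2 n (k + 1) + stirling2 n k

open Finset Nat

theorem stirling2_eq_stirlingSecond : stirling2 = stirlingSecond := by
  funext n k
  induction n, k using stirling2.induct <;> simp_all [stirling2, stirlingSecond]

theorem Nat.descFactorial_mul_self (n t : ℕ) :
    n.descFactorial t * n = n.descFactorial (t + 1) + t * n.descFactorial t := by
  rcases le_or_gt t n with h | h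
  · rw [descFactorial_succ, ← add_mul, Nat.sub_add_cancel h, mul_comm]
  · simp [descFactorial_eq_zero_iff_lt.2 h]

theorem Nat.pow_eq_sum_stirlingSecond_mul_descFactorial (n r : ℕ) :
    n ^ r = ∑ t ∈ range (r + 1), stirlingSecond r t * n.descFactorial t := by
  induction r with
  | zero => simp
  | succ r ih =>
    have shift : ∑ t ∈ range (r + 1), t * stirlingSecond r t * n.descFactorial t
        = ∑ t ∈ range (r + 1), (t + 1) * stirlingSecond r (t + 1) * n.descFactorial (t + 1) := by
      have := sum_range_succ' (fun t => t * stirlingSecond r t * n.descFactorial t) (r + 1)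
      rw [sum_range_succ, stirlingSecond_eq_zero_of_lt (lt_add_one r)] at this
      simpa using this
    calc n ^ (r + 1) = ∑ t ∈ range (r + 1), stirlingSecond r t * n.descFactorial t * n := by
          rw [pow_succ, ih, sum_mul]
      _ = ∑ t ∈ range (r + 1), (stirlingSecond r t * n.descFactorial (t + 1)
            + t * stirlingSecond r t * n.descFactorial t) := by
          refine sum_congr rfl fun t _ => ?_
          rw [mul_assoc, descFactorial_mul_self]
          ring
      _ = ∑ t ∈ range (r + 2), stirlingSecond (r + 1) t * n.descFactorial t := by
          rw [sum_add_distrib, shift, ← sum_add_distrib, sum_range_succ' _ (r + 1),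
            stirlingSecond_succ_zero, zero_mul, add_zero]
          exact sum_congr rfl fun t _ => by rw [stirlingSecond_succ_succ]; ring

theorem Nat.cast_pow_eq_sum_stirling2_mul_choose {R : Type*} [CommSemiring R] (n r : ℕ) :
    (n : R) ^ r = ∑ t ∈ range (r + 1), (stirling2 r t * t ! : R) * n.choose t := by
  have := congrArg (Nat.cast : ℕ → R) (pow_eq_sum_stirlingSecond_mul_descFactorial n r)
  push_cast [descFactorial_eq_factorial_mul_choose] at this
  simpa [stirling2_eq_stirlingSecond, mul_assoc] using this

section

variable {R : Type*} [CommRing R]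

def binomWeight (H : ℕ) (P : R) (h : ℕ) : R := H.choose h * P ^ h * (1 - P) ^ (H - h)

theorem sum_binomWeight_mul_choose (H t : ℕ) (P : R) :
    ∑ h ∈ range (H + 1), binomWeight H P h * h.choose t = H.choose t * P ^ t := by
  rcases lt_or_ge H t with hHt | htH
  · rw [choose_eq_zero_of_lt hHt, cast_zero, zero_mul]
    refine sum_eq_zero fun h hh => ?_
    rw [choose_eq_zero_of_lt (by grind), cast_zero, mul_zero]
  obtain ⟨m, rfl⟩ := exists_add_of_le htH
  have term : ∀ j ∈ range (m + 1), binomWeight (t + m) P (t + j) * (t + j).choose t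
      = (t + m).choose t * P ^ t * (P ^ j * (1 - P) ^ (m - j) * m.choose j) := by
    intro j _
    have hc : ((t + m).choose (t + j) * (t + j).choose t : R) = (t + m).choose t * m.choose j := by
      have := choose_mul (n := t + m) (le_add_right t j)
      rw [add_tsub_cancel_left, add_tsub_cancel_left] at this
      exact_mod_cast congrArg (Nat.cast : ℕ → R) this
    rw [binomWeight, show t + m - (t + j) = m - j by omega, pow_add]
    linear_combination (P ^ t * P ^ j * (1 - P) ^ (m - j)) * hc
  rw [add_assoc, sum_range_add, sum_eq_zero, zero_add, sum_congr rfl term, ← mul_sum, ← add_pow,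
    add_sub_cancel, one_pow, mul_one]
  intro h hh
  rw [choose_eq_zero_of_lt (mem_range.1 hh), cast_zero, mul_zero]

theorem sum_binomWeight_mul_pow (H r : ℕ) (P : R) :
    ∑ h ∈ range (H + 1), binomWeight H P h * (h : R) ^ r =
      ∑ t ∈ range (r + 1), (stirling2 r t * t ! : R) * (H.choose t * P ^ t) := by
  simp_rw [Nat.cast_pow_eq_sum_stirling2_mul_choose, mul_sum]
  rw [sum_comm]
  refine sum_congr rfl fun t _ => ?_
  rw [← sum_binomWeight_mul_choose, mul_sum]
  exact sum_congr rfl fun h _ => by ring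

theorem sum_binomWeight (H : ℕ) (P : R) : ∑ h ∈ range (H + 1), binomWeight H P h = 1 := by
  simpa [stirling2] using sum_binomWeight_mul_pow H 0 P

end

theorem Finset.sum_range_succ_eq_sum_Icc_one {M : Type*} [AddCommMonoid M] (f : ℕ → M) (n : ℕ)
    (h0 : f 0 = 0) : ∑ i ∈ range (n + 1), f i = ∑ i ∈ Icc 1 n, f i := by
  rw [range_succ_eq_Icc_zero, ← insert_Icc_add_one_left_eq_Icc (Nat.zero_le n),
    sum_insert (by simp), h0, zero_add, zero_add]

theorem sum_binomWeight_mul_pow_of_ne_zero {R : Type*} [CommRing R] (H : ℕ) {r : ℕ} (hr : r ≠ 0)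
    (P : R) :
    ∑ h ∈ range (H + 1), binomWeight H P h * (h : R) ^ r =
      ∑ t ∈ Icc 1 r, (stirling2 r t * t ! : R) * (H.choose t * P ^ t) := by
  obtain ⟨r, rfl⟩ := exists_eq_add_one_of_ne_zero hr
  rw [sum_binomWeight_mul_pow, sum_range_succ_eq_sum_Icc_one]
  simp [stirling2]

theorem sum_mul_add_pow {ι R : Type*} [CommSemiring R] (s : Finset ι) (w x : ι → R) (a : R)
    (k : ℕ) :
    ∑ i ∈ s, w i * (x i + a) ^ k =
      ∑ r ∈ range (k + 1), k.choose r * a ^ (k - r) * ∑ i ∈ s, w i * x i ^ r := by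
  simp_rw [add_pow, mul_sum]
  rw [sum_comm]
  exact sum_congr rfl fun r _ => sum_congr rfl fun i _ => by ring

theorem abs_sum_sub_card_mul_le {ι R : Type*} [Ring R] [LinearOrder R] [IsOrderedRing R]
    (s : Finset ι) (f : ι → R) (v c : R) (h : ∀ i ∈ s, |f i - v| ≤ c) :
    |∑ i ∈ s, f i - #s * v| ≤ #s * c := by
  rw [← nsmul_eq_mul, ← sum_const, ← sum_sub_distrib, ← nsmul_eq_mul, ← sum_const]
  exact (abs_sum_le_sum_abs _ _).trans (sum_le_sum h)

theorem abs_sum_mul_sub_sum_mul_le {ι R : Type*} [CommRing R] [LinearOrder R]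
    [IsStrictOrderedRing R]
    (s : Finset ι) (w x y e : ι → R) (h : ∀ i ∈ s, |x i - y i| ≤ e i) :
    |∑ i ∈ s, w i * x i - ∑ i ∈ s, w i * y i| ≤ ∑ i ∈ s, |w i| * e i := by
  rw [← sum_sub_distrib]
  refine (abs_sum_le_sum_abs _ _).trans (sum_le_sum fun i hi => ?_)
  rw [← mul_sub, abs_mul]
  exact mul_le_mul_of_nonneg_left (h i hi) (abs_nonneg _)

/-- The paper's `S_r`. -/
def windowPowerSum (H : ℕ) (T : Finset ℕ → ℝ) (p : ℝ) (r : ℕ) : ℝ :=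
  if r = 0 then p
  else ∑ t ∈ Icc 1 r, (stirling2 r t : ℝ) * (t ! : ℝ) * ∑ A ∈ (Icc 1 H).powersetCard t, T A

theorem abs_windowPowerSum_sub_le (H r : ℕ) (T : Finset ℕ → ℝ) (p P c : ℝ)
    (hT : ∀ A ⊆ Icc 1 H, A.Nonempty → |T A - p * P ^ #A| ≤ c) :
    |windowPowerSum H T p r - p * ∑ h ∈ range (H + 1), binomWeight H P h * (h : ℝ) ^ r|
      ≤ c * ∑ t ∈ Icc 1 r, (stirling2 r t : ℝ) * (t ! : ℝ) * (H.choose t : ℝ) := by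
  unfold windowPowerSum
  split_ifs with hr
  · simp [hr, sum_binomWeight]
  have hpattern : ∀ t ∈ Icc 1 r,
      |∑ A ∈ (Icc 1 H).powersetCard t, T A - H.choose t * (p * P ^ t)| ≤ H.choose t * c := by
    intro t ht
    have := abs_sum_sub_card_mul_le ((Icc 1 H).powersetCard t) T (p * P ^ t) c fun A hA => by
      obtain ⟨hAsub, hAcard⟩ := mem_powersetCard.1 hA
      rw [← hAcard]
      exact hT A hAsub (card_pos.1 (by grind))
    simpa [card_powersetCard] using this
  calc _ = |∑ t ∈ Icc 1 r, (stirling2 r t * t ! : ℝ) * ∑ A ∈ (Icc 1 H).powersetCard t, T A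
        - ∑ t ∈ Icc 1 r, (stirling2 r t * t ! : ℝ) * (H.choose t * (p * P ^ t))| := by
        rw [sum_binomWeight_mul_pow_of_ne_zero H hr, mul_sum]
        congr 2
        all_goals exact sum_congr rfl fun t _ => by ring
    _ ≤ ∑ t ∈ Icc 1 r, |(stirling2 r t * t ! : ℝ)| * (H.choose t * c) :=
        abs_sum_mul_sub_sum_mul_le _ _ _ _ _ hpattern
    _ = _ := by
        rw [mul_sum]
        exact sum_congr rfl fun t _ => by rw [abs_of_nonneg (by positivity)]; ring

theorem moment_computation_general (p H : ℕ)
    (N₀ c : ℝ) (hN₀0 : 0 ≤ N₀) (k : ℕ)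
    (T : Finset ℕ → ℝ)
    (hT : ∀ A ⊆ Finset.Icc 1 H, A.Nonempty →
      |T A - p * (N₀ / p) ^ A.card| ≤ c) :
    ∃ E' : ℝ,
      (∑ r ∈ Finset.range (k + 1), (k.choose r : ℝ) * (-(H * N₀ / p)) ^ (k - r) *
          (if r = 0 then (p : ℝ)
            else ∑ t ∈ Finset.Icc 1 r, (stirling2 r t : ℝ) * (t.factorial : ℝ) *
              ∑ A ∈ (Finset.Icc 1 H).powersetCard t, T A))
        = p * (∑ h ∈ Finset.range (H + 1),
            (H.choose h : ℝ) * (N₀ / p) ^ h * (1 - N₀ / p) ^ (H - h)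
              * ((h : ℝ) - H * (N₀ / p)) ^ k) + E'
      ∧ |E'| ≤ c * ∑ r ∈ Finset.Icc 1 k, (k.choose r : ℝ) * (H * N₀ / p) ^ (k - r) *
          ∑ t ∈ Finset.Icc 1 r, (stirling2 r t : ℝ) * (t.factorial : ℝ) * (H.choose t : ℝ) := by
  refine ⟨_, (add_sub_cancel _ _).symm, ?_⟩
  have hcentral : (p : ℝ) * ∑ h ∈ range (H + 1), (H.choose h : ℝ) * (N₀ / p) ^ h *
      (1 - N₀ / p) ^ (H - h) * ((h : ℝ) - H * (N₀ / p)) ^ k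
      = ∑ r ∈ range (k + 1), (k.choose r : ℝ) * (-(H * N₀ / p)) ^ (k - r) *
          (p * ∑ h ∈ range (H + 1), binomWeight H (N₀ / p) h * (h : ℝ) ^ r) := by
    have hshift : ∑ h ∈ range (H + 1), (H.choose h : ℝ) * (N₀ / p) ^ h *
        (1 - N₀ / p) ^ (H - h) * ((h : ℝ) - H * (N₀ / p)) ^ k
        = ∑ h ∈ range (H + 1), binomWeight H (N₀ / p) h * ((h : ℝ) + -(H * N₀ / p)) ^ k :=
      sum_congr rfl fun h _ => by rw [binomWeight]; ring
    rw [hshift, sum_mul_add_pow, mul_sum]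
    exact sum_congr rfl fun r _ => by ring
  rw [hcentral, mul_sum, ← sum_range_succ_eq_sum_Icc_one _ _ (by simp)]
  refine (abs_sum_mul_sub_sum_mul_le _ _ _ _ _ fun r _ =>
    abs_windowPowerSum_sub_le H r T p (N₀ / p) c hT).trans_eq (sum_congr rfl fun r _ => ?_)
  rw [abs_mul, abs_pow, abs_neg, Nat.abs_cast, abs_of_nonneg (by positivity : 0 ≤ H * N₀ / p)]
  ring

/-- The abstract moment computation: if the pattern counts `T(A)` are within `c` of
their expected value `p(N₀/p)^|A|`, then the `k`-th moment `M_k` equals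
`p·μ_k(H, N₀/p)` up to a controlled error. -/
theorem moment_computation (p H : ℕ) (hp : p.Prime) (hH : 0 < H)
    (N₀ c : ℝ) (hN₀0 : 0 ≤ N₀) (hN₀p : N₀ ≤ p) (k : ℕ)
    (T : Finset ℕ → ℝ)
    (hT : ∀ A ⊆ Finset.Icc 1 H, A.Nonempty →
      |T A - p * (N₀ / p) ^ A.card| ≤ c) :
    ∃ E' : ℝ,
      (∑ r ∈ Finset.range (k + 1), (k.choose r : ℝ) * (-(H * N₀ / p)) ^ (k - r) *
          (if r = 0 then (p : ℝ)
            else ∑ t ∈ Finset.Icc 1 r, (stirling2 r t : ℝ) * (t.factorial : ℝ) *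
              ∑ A ∈ (Finset.Icc 1 H).powersetCard t, T A))
        = p * (∑ h ∈ Finset.range (H + 1),
            (H.choose h : ℝ) * (N₀ / p) ^ h * (1 - N₀ / p) ^ (H - h)
              * ((h : ℝ) - H * (N₀ / p)) ^ k) + E'
      ∧ |E'| ≤ c * ∑ r ∈ Finset.Icc 1 k, (k.choose r : ℝ) * (H * N₀ / p) ^ (k - r) *
          ∑ t ∈ Finset.Icc 1 r, (stirling2 r t : ℝ) * (t.factorial : ℝ) * (H.choose t : ℝ) :=
  moment_computation_general p H N₀ c hN₀0 k T hT
end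

section
/- Let p be a prime, r ≥ 2, and x₁, …, x_r distinct elements of 𝔽_p. Then there exists a nonzero integer t with |t| ≤ p - 1 and integers y₁, …, y_r such that |y_j| ≤ p·(p-1)^(-1/r) and y_j ≡ t·x_j (mod p) for all j ∈ {1, …, r}. -/
/-- Simultaneous approximation step in the proof of Lemma 2.2: via Minkowski's
theorem, there is a nonzero `t` with `|t| ≤ p-1` and integers `y_j ≡ t·x_j (mod p)`
with `|y_j| ≤ p(p-1)^{-1/r}`. -/
theorem simultaneous_approximation (p r : ℕ) (hp : p.Prime) (hr : 2 ≤ r)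
    (x : Fin r → ZMod p) (hx : Function.Injective x) :
    ∃ t : ℤ, t ≠ 0 ∧ t.natAbs ≤ p - 1 ∧
      ∃ y : Fin r → ℤ, ∀ j,
        ((y j).natAbs : ℝ) ≤ (p : ℝ) * ((p : ℝ) - 1) ^ (-(1 : ℝ) / r) ∧
        ((y j : ZMod p) = (t : ZMod p) * x j) := by
  haveI : NeZero p := ⟨hp.ne_zero⟩
  have hr0 : (r : ℝ) ≠ 0 := by positivity
  by_cases hp2 : p = 2
  · subst hp2
    refine ⟨1, one_ne_zero, by norm_num, fun j => ((x j).val : ℤ), fun j => ⟨?_, ?_⟩⟩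
    · have hv : (x j).val < 2 := ZMod.val_lt (x j)
      have : ((2:ℕ):ℝ) - 1 = 1 := by norm_num
      rw [this, Real.one_rpow]
      simp only [Int.natAbs_natCast]
      push_cast
      have : ((x j).val : ℝ) ≤ 1 := by exact_mod_cast Nat.lt_succ_iff.mp hv
      linarith
    · push_cast
      simp [ZMod.natCast_val, ZMod.cast_id]
  · have hp3 : 3 ≤ p := by
      rcases hp.two_le.lt_or_eq with h | h
      · omega
      · omega
    have hp1R : (1 : ℝ) < (p : ℝ) - 1 := by
      have : (3:ℝ) ≤ p := by exact_mod_cast hp3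
      linarith
    have hp1pos : (0 : ℝ) < (p : ℝ) - 1 := by linarith
    set c : ℝ := (p : ℝ) * ((p : ℝ) - 1) ^ (-(1 : ℝ) / r) with hc
    have hcpos : 0 < c := by
      apply mul_pos (by positivity)
      exact Real.rpow_pos_of_pos hp1pos _
    set b : ℕ := ⌊c⌋₊ with hbdef
    have hbc : (b : ℝ) ≤ c := Nat.floor_le hcpos.le
    have hcb1 : c < b + 1 := Nat.lt_floor_add_one c
    -- b < p
    have hclt : c < p := by
      have h1 : ((p : ℝ) - 1) ^ (-(1 : ℝ) / r) < 1 := by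
        apply Real.rpow_lt_one_of_one_lt_of_neg hp1R
        have : (0:ℝ) < r := by positivity
        rw [neg_div]
        exact neg_neg_of_pos (by positivity)
      calc c < (p:ℝ) * 1 := by
              apply mul_lt_mul_of_pos_left h1 (by positivity)
           _ = p := mul_one _
    have hbp : b < p := by
      have := Nat.floor_lt hcpos.le |>.mpr hclt
      simpa using this
    -- cardinality inequality
    have hcard : p ^ r < p * (b + 1) ^ r := by
      have hcr : c ^ r = (p : ℝ) ^ r / ((p : ℝ) - 1) := by
        rw [hc, mul_pow, ← Real.rpow_natCast (((p:ℝ)-1) ^ (-(1:ℝ)/r)) r,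
            ← Real.rpow_mul hp1pos.le]
        rw [div_mul_cancel₀ (-1 : ℝ) hr0, Real.rpow_neg_one]
        ring
      have h1 : c ^ r < ((b:ℝ) + 1) ^ r := by
        apply pow_lt_pow_left₀ hcb1 hcpos.le
        positivity
      have h2 : (p:ℝ) ^ r / ((p:ℝ) - 1) < ((b:ℝ)+1) ^ r := hcr ▸ h1
      have h3 : (p:ℝ) ^ r < (p:ℝ) * ((b:ℝ)+1) ^ r := by
        have hpp : (p:ℝ) - 1 < p := by linarith
        have := (div_lt_iff₀ hp1pos).mp h2
        nlinarith [pow_pos (show (0:ℝ) < (b:ℝ)+1 by positivity) r]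
      exact_mod_cast h3
    -- pigeonhole
    set F : ZMod p × (Fin r → Fin (b + 1)) → (Fin r → ZMod p) :=
      fun q j => q.1 * x j + ((q.2 j : ℕ) : ZMod p) with hF
    have hcards : Fintype.card (Fin r → ZMod p)
        < Fintype.card (ZMod p × (Fin r → Fin (b + 1))) := by
      simp [ZMod.card, Fintype.card_fun]
      exact hcard
    obtain ⟨q, q', hne, heq⟩ := Fintype.exists_ne_map_eq_of_card_lt F hcards
    have heqj : ∀ j, q.1 * x j + ((q.2 j : ℕ) : ZMod p)
        = q'.1 * x j + ((q'.2 j : ℕ) : ZMod p) := fun j => congrFun heq j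
    have ht : q.1 ≠ q'.1 := by
      intro h
      apply hne
      have h2 : q.2 = q'.2 := by
        funext j
        have := heqj j
        rw [h] at this
        have h3 : ((q.2 j : ℕ) : ZMod p) = ((q'.2 j : ℕ) : ZMod p) := by
          exact add_left_cancel this
        have hv1 : (q.2 j : ℕ) < p := lt_of_lt_of_le (q.2 j).isLt hbp
        have hv2 : (q'.2 j : ℕ) < p := lt_of_lt_of_le (q'.2 j).isLt hbp
        have := ZMod.val_cast_of_lt hv1 ▸ ZMod.val_cast_of_lt hv2 ▸ congrArg ZMod.val h3
        exact Fin.ext this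
      exact Prod.ext h h2
    set t0 : ZMod p := q.1 - q'.1 with ht0
    have ht0ne : t0 ≠ 0 := sub_ne_zero_of_ne ht
    refine ⟨(t0.val : ℤ), ?_, ?_, fun j => ((q'.2 j : ℕ) : ℤ) - ((q.2 j : ℕ) : ℤ),
      fun j => ⟨?_, ?_⟩⟩
    · simp only [ne_eq, Int.natCast_eq_zero]
      rw [ZMod.val_eq_zero]
      exact ht0ne
    · simp only [Int.natAbs_natCast]
      have := ZMod.val_lt t0
      omega
    · have h1 : (q.2 j : ℕ) ≤ b := Nat.lt_succ_iff.mp (q.2 j).isLt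
      have h2 : (q'.2 j : ℕ) ≤ b := Nat.lt_succ_iff.mp (q'.2 j).isLt
      have h3 : (((q'.2 j : ℕ) : ℤ) - ((q.2 j : ℕ) : ℤ)).natAbs ≤ b := by omega
      calc ((((q'.2 j : ℕ) : ℤ) - ((q.2 j : ℕ) : ℤ)).natAbs : ℝ) ≤ (b : ℝ) := by
            exact_mod_cast h3
        _ ≤ c := hbc
    · have h := heqj j
      have hcast : ((t0.val : ℤ) : ZMod p) = t0 := by
        simp [ZMod.natCast_val, ZMod.cast_id]
      have hc1 : (((((q'.2 j : ℕ) : ℤ)) - ((q.2 j : ℕ) : ℤ) : ℤ) : ZMod p)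
          = ((q'.2 j : ℕ) : ZMod p) - ((q.2 j : ℕ) : ZMod p) := by push_cast; ring
      rw [hc1, hcast, ht0]
      linear_combination -h
end
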